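/- arXiv:2002.07278 — 3 statements merged into one kernel-verified Lean document; each statement's English description precedes it below -/
import Mathlib

section
/- For every alternating parity automaton A, if the nondeterministic parity automaton A^□ is GFG, then A is ∃GFG. -/
set_option autoImplicit false
set_option linter.unusedVariables false

/-! ### Positive Boolean formulas -/

inductive PosBool (Q : Type) : Type
  | atom : Q → PosBool Q
  | and : PosBool Q → PosBool Q → PosBool Q
  | or : PosBool Q → PosBool Q → PosBool Q

namespace PosBool

variable {Q : Type}

/-- The possible outcomes of Eve resolving all the disjunctions of a positive
Boolean formula: each element of `eveRes φ` is the set of atoms that Adam can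
reach (by resolving the conjunctions) against that fixed resolution of Eve.
These are exactly the `q`-boxes of the one-step game over the formula `φ`. -/
def eveRes : PosBool Q → Set (Set Q)
  | atom q => {{q}}
  | and f g => {s | ∃ u ∈ eveRes f, ∃ v ∈ eveRes g, s = u ∪ v}
  | or f g => eveRes f ∪ eveRes g

/-- The dual formula: swap disjunctions and conjunctions. -/
def dual : PosBool Q → PosBool Q
  | atom q => atom q
  | and f g => or (dual f) (dual g)
  | or f g => and (dual f) (dual g)

/-- Length (number of nodes) of a formula. -/
def size : PosBool Q → ℕ
  | atom _ => 1
  | and f g => size f + size g + 1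
  | or f g => size f + size g + 1

/-- Atoms occurring in a formula. -/
def atoms : PosBool Q → Set Q
  | atom q => {q}
  | and f g => atoms f ∪ atoms g
  | or f g => atoms f ∪ atoms g

/-- A purely conjunctive formula (no disjunctions). -/
def NoOr : PosBool Q → Prop
  | atom _ => True
  | and f g => NoOr f ∧ NoOr g
  | or _ _ => False

/-- A purely disjunctive formula (no conjunctions). -/
def NoAnd : PosBool Q → Prop
  | atom _ => True
  | and _ _ => False
  | or f g => NoAnd f ∧ NoAnd g

/-- Disjunctive normal form: a disjunction of conjunctions. -/
def IsDNF : PosBool Q → Prop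
  | or f g => IsDNF f ∧ IsDNF g
  | φ => NoOr φ

end PosBool

/-! ### Acceptance conditions -/

/-- `c` appears infinitely often in `f`. -/
def InfOften (f : ℕ → ℕ) (c : ℕ) : Prop := ∀ n, ∃ m, n ≤ m ∧ f m = c

/-- The parity condition: the highest value appearing infinitely often is even. -/
def ParityAccept (f : ℕ → ℕ) : Prop :=
  ∃ c, Even c ∧ InfOften f c ∧ ∀ d, InfOften f d → d ≤ c

/-- The sequence `ρ` visits the set `S` infinitely often. -/
def InfOftenIn {T : Type} (ρ : ℕ → T) (S : Set T) : Prop := ∀ n, ∃ m, n ≤ m ∧ ρ m ∈ S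

/-- A Rabin (or Streett) pair of sets of transitions. -/
structure RabinPair (T : Type) where
  bad : Set T
  good : Set T

/-- The Rabin condition for pairs `⟨B_i, G_i⟩`, `i < k`: for some `i`,
`inf(ρ) ∩ B_i = ∅` and `inf(ρ) ∩ G_i ≠ ∅`. -/
def RabinAccept {T : Type} {k : ℕ} (pairs : Fin k → RabinPair T) (ρ : ℕ → T) : Prop :=
  ∃ i, ¬ InfOftenIn ρ (pairs i).bad ∧ InfOftenIn ρ (pairs i).good

/-- The Streett condition for pairs `⟨B_i, G_i⟩`, `i < k`: for every `i`,
`inf(ρ) ∩ B_i = ∅` or `inf(ρ) ∩ G_i ≠ ∅`. -/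
def StreettAccept {T : Type} {k : ℕ} (pairs : Fin k → RabinPair T) (ρ : ℕ → T) : Prop :=
  ∀ i, ¬ InfOftenIn ρ (pairs i).bad ∨ InfOftenIn ρ (pairs i).good

/-! ### Generic two-player games of infinite duration.

A game proceeds in rounds; in each round, from the current game state, up to
six moves are played in alternation: Adam moves first (`a1`), then Eve (`e1`),
then Adam (`a2`), then Eve (`e2`), then Adam (`a3`), then Eve (`e3`).
(Unused phases are modelled by the type `Unit`.)  Strategies may use the full
history of the play (the list of previous complete rounds) as well as the moves
already played in the current round.  Eve wins an infinite play iff the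
sequence of rounds satisfies the winning condition `win`. -/

structure GameRound (St α1 β1 α2 β2 α3 β3 : Type) where
  st : St
  a1 : α1
  e1 : β1
  a2 : α2
  e2 : β2
  a3 : α3
  e3 : β3

structure Game (St α1 β1 α2 β2 α3 β3 : Type) where
  init : St
  A1 : St → Set α1
  E1 : St → α1 → Set β1
  A2 : St → α1 → β1 → Set α2
  E2 : St → α1 → β1 → α2 → Set β2
  A3 : St → α1 → β1 → α2 → β2 → Set α3
  E3 : St → α1 → β1 → α2 → β2 → α3 → Set β3
  next : St → α1 → β1 → α2 → β2 → α3 → β3 → St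
  win : (ℕ → GameRound St α1 β1 α2 β2 α3 β3) → Prop

namespace Game

variable {St α1 β1 α2 β2 α3 β3 : Type}

/-- The states along the play are correctly updated. -/
def StateOk (G : Game St α1 β1 α2 β2 α3 β3) (ρ : ℕ → GameRound St α1 β1 α2 β2 α3 β3) : Prop :=
  (ρ 0).st = G.init ∧
  ∀ n, (ρ (n+1)).st = G.next (ρ n).st (ρ n).a1 (ρ n).e1 (ρ n).a2 (ρ n).e2 (ρ n).a3 (ρ n).e3

/-- Round `n` of the play is entirely legal. -/
def RoundLegal (G : Game St α1 β1 α2 β2 α3 β3) (ρ : ℕ → GameRound St α1 β1 α2 β2 α3 β3)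
    (n : ℕ) : Prop :=
  (ρ n).a1 ∈ G.A1 (ρ n).st ∧
  (ρ n).e1 ∈ G.E1 (ρ n).st (ρ n).a1 ∧
  (ρ n).a2 ∈ G.A2 (ρ n).st (ρ n).a1 (ρ n).e1 ∧
  (ρ n).e2 ∈ G.E2 (ρ n).st (ρ n).a1 (ρ n).e1 (ρ n).a2 ∧
  (ρ n).a3 ∈ G.A3 (ρ n).st (ρ n).a1 (ρ n).e1 (ρ n).a2 (ρ n).e2 ∧
  (ρ n).e3 ∈ G.E3 (ρ n).st (ρ n).a1 (ρ n).e1 (ρ n).a2 (ρ n).e2 (ρ n).a3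

/-- All rounds before round `n` are entirely legal. -/
def Hleg (G : Game St α1 β1 α2 β2 α3 β3) (ρ : ℕ → GameRound St α1 β1 α2 β2 α3 β3)
    (n : ℕ) : Prop :=
  ∀ m, m < n → RoundLegal G ρ m

/-- Eve wins the play `ρ`: she is never the first player to make an illegal
move (the moves of each round are ordered `a1, e1, a2, e2, a3, e3`), and if all
moves are legal then the play satisfies the winning condition. -/
def EveWinsPlay (G : Game St α1 β1 α2 β2 α3 β3)
    (ρ : ℕ → GameRound St α1 β1 α2 β2 α3 β3) : Prop :=
  (∀ n, Hleg G ρ n → (ρ n).a1 ∈ G.A1 (ρ n).st →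
      (ρ n).e1 ∈ G.E1 (ρ n).st (ρ n).a1) ∧
  (∀ n, Hleg G ρ n → (ρ n).a1 ∈ G.A1 (ρ n).st →
      (ρ n).e1 ∈ G.E1 (ρ n).st (ρ n).a1 →
      (ρ n).a2 ∈ G.A2 (ρ n).st (ρ n).a1 (ρ n).e1 →
      (ρ n).e2 ∈ G.E2 (ρ n).st (ρ n).a1 (ρ n).e1 (ρ n).a2) ∧
  (∀ n, Hleg G ρ n → (ρ n).a1 ∈ G.A1 (ρ n).st →
      (ρ n).e1 ∈ G.E1 (ρ n).st (ρ n).a1 →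
      (ρ n).a2 ∈ G.A2 (ρ n).st (ρ n).a1 (ρ n).e1 →
      (ρ n).e2 ∈ G.E2 (ρ n).st (ρ n).a1 (ρ n).e1 (ρ n).a2 →
      (ρ n).a3 ∈ G.A3 (ρ n).st (ρ n).a1 (ρ n).e1 (ρ n).a2 (ρ n).e2 →
      (ρ n).e3 ∈ G.E3 (ρ n).st (ρ n).a1 (ρ n).e1 (ρ n).a2 (ρ n).e2 (ρ n).a3) ∧
  ((∀ n, RoundLegal G ρ n) → G.win ρ)

/-- Adam wins the play `ρ`: he is never the first player to make an illegal
move, and if all moves are legal then the play violates the (Eve) winning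
condition. -/
def AdamWinsPlay (G : Game St α1 β1 α2 β2 α3 β3)
    (ρ : ℕ → GameRound St α1 β1 α2 β2 α3 β3) : Prop :=
  (∀ n, Hleg G ρ n → (ρ n).a1 ∈ G.A1 (ρ n).st) ∧
  (∀ n, Hleg G ρ n → (ρ n).a1 ∈ G.A1 (ρ n).st →
      (ρ n).e1 ∈ G.E1 (ρ n).st (ρ n).a1 →
      (ρ n).a2 ∈ G.A2 (ρ n).st (ρ n).a1 (ρ n).e1) ∧
  (∀ n, Hleg G ρ n → (ρ n).a1 ∈ G.A1 (ρ n).st →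
      (ρ n).e1 ∈ G.E1 (ρ n).st (ρ n).a1 →
      (ρ n).a2 ∈ G.A2 (ρ n).st (ρ n).a1 (ρ n).e1 →
      (ρ n).e2 ∈ G.E2 (ρ n).st (ρ n).a1 (ρ n).e1 (ρ n).a2 →
      (ρ n).a3 ∈ G.A3 (ρ n).st (ρ n).a1 (ρ n).e1 (ρ n).a2 (ρ n).e2) ∧
  ((∀ n, RoundLegal G ρ n) → ¬ G.win ρ)

/-- The history of a play before round `n`: the list of the first `n` rounds. -/
def hist (ρ : ℕ → GameRound St α1 β1 α2 β2 α3 β3) (n : ℕ) : List (GameRound St α1 β1 α2 β2 α3 β3) :=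
  (List.range n).map ρ

/-- A strategy of Eve: for each of her three moves in a round, a choice
depending on the history, the current state, and the moves already played
in the current round. -/
structure EStrat (St α1 β1 α2 β2 α3 β3 : Type) where
  f1 : List (GameRound St α1 β1 α2 β2 α3 β3) → St → α1 → β1
  f2 : List (GameRound St α1 β1 α2 β2 α3 β3) → St → α1 → β1 → α2 → β2
  f3 : List (GameRound St α1 β1 α2 β2 α3 β3) → St → α1 → β1 → α2 → β2 → α3 → β3

/-- A strategy of Adam. -/
structure AStrat (St α1 β1 α2 β2 α3 β3 : Type) where
  g1 : List (GameRound St α1 β1 α2 β2 α3 β3) → St → α1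
  g2 : List (GameRound St α1 β1 α2 β2 α3 β3) → St → α1 → β1 → α2
  g3 : List (GameRound St α1 β1 α2 β2 α3 β3) → St → α1 → β1 → α2 → β2 → α3

/-- The play `ρ` is consistent with the strategy `σ` of Eve. -/
def ConsE (σ : EStrat St α1 β1 α2 β2 α3 β3) (ρ : ℕ → GameRound St α1 β1 α2 β2 α3 β3) : Prop :=
  ∀ n, (ρ n).e1 = σ.f1 (hist ρ n) (ρ n).st (ρ n).a1 ∧
       (ρ n).e2 = σ.f2 (hist ρ n) (ρ n).st (ρ n).a1 (ρ n).e1 (ρ n).a2 ∧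
       (ρ n).e3 = σ.f3 (hist ρ n) (ρ n).st (ρ n).a1 (ρ n).e1 (ρ n).a2 (ρ n).e2 (ρ n).a3

/-- The play `ρ` is consistent with the strategy `τ` of Adam. -/
def ConsA (τ : AStrat St α1 β1 α2 β2 α3 β3) (ρ : ℕ → GameRound St α1 β1 α2 β2 α3 β3) : Prop :=
  ∀ n, (ρ n).a1 = τ.g1 (hist ρ n) (ρ n).st ∧
       (ρ n).a2 = τ.g2 (hist ρ n) (ρ n).st (ρ n).a1 (ρ n).e1 ∧
       (ρ n).a3 = τ.g3 (hist ρ n) (ρ n).st (ρ n).a1 (ρ n).e1 (ρ n).a2 (ρ n).e2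

/-- `σ` is a winning strategy for Eve: every play consistent with `σ` is won
by Eve. -/
def EveWinningStrat (G : Game St α1 β1 α2 β2 α3 β3) (σ : EStrat St α1 β1 α2 β2 α3 β3) : Prop :=
  ∀ ρ, StateOk G ρ → ConsE σ ρ → EveWinsPlay G ρ

/-- Eve wins the game `G`. -/
def EveWins (G : Game St α1 β1 α2 β2 α3 β3) : Prop := ∃ σ, EveWinningStrat G σ

/-- `τ` is a winning strategy for Adam: every play consistent with `τ` is won
by Adam. -/
def AdamWinningStrat (G : Game St α1 β1 α2 β2 α3 β3) (τ : AStrat St α1 β1 α2 β2 α3 β3) : Prop :=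
  ∀ ρ, StateOk G ρ → ConsA τ ρ → AdamWinsPlay G ρ

/-- Adam wins the game `G`. -/
def AdamWins (G : Game St α1 β1 α2 β2 α3 β3) : Prop := ∃ τ, AdamWinningStrat G τ

end Game
/-! ### Alternating automata on infinite words -/

/-- An alternating automaton over the alphabet `A`: a set of states, an initial
state, a transition function assigning to each state and letter a positive
Boolean formula over the states, and an acceptance condition `acc` on infinite
sequences of transitions `(q_n, a_n, q_{n+1})`. -/
structure AltAut (A : Type) where
  Q : Type
  init : Q
  delta : Q → A → PosBool Q
  acc : (ℕ → Q × A × Q) → Prop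

namespace AltAut

variable {A : Type}

/-- `M` is a parity automaton with priority labelling `p`. -/
def IsParity (M : AltAut A) (p : M.Q → A → M.Q → ℕ) : Prop :=
  ∀ ρ, M.acc ρ ↔ ParityAccept fun n => p (ρ n).1 (ρ n).2.1 (ρ n).2.2

/-- `M` is a Rabin automaton with the Rabin pairs `pairs`. -/
def IsRabin (M : AltAut A) {k : ℕ} (pairs : Fin k → RabinPair (M.Q × A × M.Q)) : Prop :=
  ∀ ρ, M.acc ρ ↔ RabinAccept pairs ρ

/-- `M` is a Streett automaton with the Streett pairs `pairs`. -/
def IsStreett (M : AltAut A) {k : ℕ} (pairs : Fin k → RabinPair (M.Q × A × M.Q)) : Prop :=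
  ∀ ρ, M.acc ρ ↔ StreettAccept pairs ρ

/-- `M` is a Büchi automaton with accepting transitions `F`. -/
def IsBuchi (M : AltAut A) (F : Set (M.Q × A × M.Q)) : Prop :=
  ∀ ρ, M.acc ρ ↔ InfOftenIn ρ F

/-- `M` is a weak automaton (with parity labelling `p`): every path following
transitions of the automaton eventually remains in a single priority. -/
def IsWeak (M : AltAut A) (p : M.Q → A → M.Q → ℕ) : Prop :=
  M.IsParity p ∧
  ∀ ρ : ℕ → M.Q × A × M.Q,
    (∀ n, (ρ n).2.2 = (ρ (n+1)).1 ∧ (ρ n).2.2 ∈ PosBool.atoms (M.delta (ρ n).1 (ρ n).2.1)) →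
    ∃ N c, ∀ n, N ≤ n → p (ρ n).1 (ρ n).2.1 (ρ n).2.2 = c

/-- `M` is nondeterministic: all transition conditions are disjunctive. -/
def IsNondet (M : AltAut A) : Prop := ∀ q a, (M.delta q a).NoAnd

/-- `M` is universal: all transition conditions are conjunctive. -/
def IsUniversal (M : AltAut A) : Prop := ∀ q a, (M.delta q a).NoOr

/-- The dual automaton: swap disjunctions and conjunctions, and dualise the
acceptance condition. -/
def dual (M : AltAut A) : AltAut A where
  Q := M.Q
  init := M.init
  delta q a := (M.delta q a).dual
  acc ρ := ¬ M.acc ρ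

/-- The model-checking (acceptance) game of `M` over the word `w`.  A round
from state `q` at step `n`: Eve resolves the disjunctions of `δ(q, w_n)`
(choosing an element of `eveRes`), and Adam resolves the conjunctions
(choosing a state in that set).  Eve wins iff the resulting path of
transitions is accepting. -/
def mcGame (M : AltAut A) (w : ℕ → A) :
    Game (ℕ × M.Q) Unit (Set M.Q) M.Q Unit Unit Unit where
  init := (0, M.init)
  A1 _ := Set.univ
  E1 p _ := PosBool.eveRes (M.delta p.2 (w p.1))
  A2 _ _ S := S
  E2 _ _ _ _ := Set.univ
  A3 _ _ _ _ _ := Set.univ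
  E3 _ _ _ _ _ _ := Set.univ
  next p _ _ q' _ _ _ := (p.1 + 1, q')
  win ρ := M.acc fun n => ((ρ n).st.2, w n, (ρ n).a2)

/-- The language of `M`: the words for which Eve wins the model-checking game. -/
def Lang (M : AltAut A) : Set (ℕ → A) := {w | Game.EveWins (M.mcGame w)}

/-- Eve's letter game on `M`: Adam picks a letter, then the one-step formula is
resolved (Eve the disjunctions, Adam the conjunctions).  Eve wins iff the word
played is not in `L(M)` or the path produced is accepting. -/
def eLetterGame (M : AltAut A) : Game M.Q A (Set M.Q) M.Q Unit Unit Unit where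
  init := M.init
  A1 _ := Set.univ
  E1 q a := PosBool.eveRes (M.delta q a)
  A2 _ _ S := S
  E2 _ _ _ _ := Set.univ
  A3 _ _ _ _ _ := Set.univ
  E3 _ _ _ _ _ _ := Set.univ
  next _ _ _ q' _ _ _ := q'
  win ρ := (fun n => (ρ n).a1) ∉ M.Lang ∨ M.acc fun n => ((ρ n).st, (ρ n).a1, (ρ n).a2)

/-- Adam's letter game on `M`: Eve picks a letter and resolves the disjunctions
of the one-step formula, Adam resolves the conjunctions.  Adam wins iff the
word played is in `L(M)` or the path produced is rejecting; accordingly the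
condition `win` (for Eve) is that the word is not in `L(M)` and the path is
accepting. -/
def aLetterGame (M : AltAut A) : Game M.Q Unit (A × Set M.Q) M.Q Unit Unit Unit where
  init := M.init
  A1 _ := Set.univ
  E1 q _ := {m : A × Set M.Q | m.2 ∈ PosBool.eveRes (M.delta q m.1)}
  A2 _ _ m := m.2
  E2 _ _ _ _ := Set.univ
  A3 _ _ _ _ _ := Set.univ
  E3 _ _ _ _ _ _ := Set.univ
  next _ _ _ q' _ _ _ := q'
  win ρ := (fun n => (ρ n).e1.1) ∉ M.Lang ∧ M.acc fun n => ((ρ n).st, (ρ n).e1.1, (ρ n).a2)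

/-- `M` is ∃GFG: Eve wins her letter game. -/
def ExistsGFG (M : AltAut A) : Prop := Game.EveWins M.eLetterGame

/-- `M` is ∀GFG: Adam wins his letter game. -/
def ForallGFG (M : AltAut A) : Prop := Game.AdamWins M.aLetterGame

/-- `M` is good-for-games: it is both ∃GFG and ∀GFG. -/
def GFG (M : AltAut A) : Prop := M.ExistsGFG ∧ M.ForallGFG

/-- `b` is a box of `M` over the letter `a`: a simultaneous resolution, for
every state `q`, of the disjunctions of `δ(q, a)`; `b q` is the set of states
Adam can reach from `q` against this resolution. -/
def IsBox (M : AltAut A) (a : A) (b : M.Q → Set M.Q) : Prop :=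
  ∀ q, b q ∈ PosBool.eveRes (M.delta q a)

/-- The boxes of `M` (over all letters), as an alphabet. -/
def Boxes (M : AltAut A) : Type := {β : A × (M.Q → Set M.Q) // M.IsBox β.1 β.2}

/-- A sequence of (letter, box) pairs is universally accepting for `M` if every
path through it starting at the initial state is accepting. -/
def UnivAcceptingRaw (M : AltAut A) (u : ℕ → A × (M.Q → Set M.Q)) : Prop :=
  ∀ ρ : ℕ → M.Q, ρ 0 = M.init → (∀ n, ρ (n+1) ∈ (u n).2 (ρ n)) →
    M.acc fun n => (ρ n, (u n).1, ρ (n+1))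

/-- The set of universally accepting words over the alphabet of boxes of `M`. -/
def UnivAccLang (M : AltAut A) : Set (ℕ → M.Boxes) :=
  {u | M.UnivAcceptingRaw fun n => (u n).val}

/-- The size of an automaton: the maximum of the size of the alphabet, the
number of states and the total length of the transition conditions. -/
noncomputable def sizeN (M : AltAut A) : ℕ :=
  max (Nat.card A) (max (Nat.card M.Q) (∑ᶠ q : M.Q, ∑ᶠ a : A, (M.delta q a).size))

/-- The two-token game `G₂(M)` on an alternating automaton `M`.  A configuration
is a triple of states `(p, q₁, q₂)`; in each turn Adam picks a letter `a`, the
players resolve `δ_M(p, a)` (Eve the disjunctions, Adam the conjunctions),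
producing a transition of Eve's token, and then resolve `δ_{M̄}(q₁, a)` and
`δ_{M̄}(q₂, a)` in the dual automaton (Adam the disjunctions, Eve the
conjunctions), producing transitions of Adam's two tokens.  Eve wins iff her
path is accepting in `M`, or both of Adam's paths are rejecting in `M`. -/
def G2 (M : AltAut A) :
    Game (M.Q × M.Q × M.Q) A (Set M.Q) (M.Q × Set M.Q × Set M.Q) (M.Q × M.Q) Unit Unit where
  init := (M.init, M.init, M.init)
  A1 _ := Set.univ
  E1 c a := PosBool.eveRes (M.delta c.1 a)
  A2 c a S := {m | m.1 ∈ S ∧ m.2.1 ∈ PosBool.eveRes (M.dual.delta c.2.1 a) ∧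
                   m.2.2 ∈ PosBool.eveRes (M.dual.delta c.2.2 a)}
  E2 _ _ _ m := {x | x.1 ∈ m.2.1 ∧ x.2 ∈ m.2.2}
  A3 _ _ _ _ _ := Set.univ
  E3 _ _ _ _ _ _ := Set.univ
  next c _ _ m x _ _ := (m.1, x.1, x.2)
  win ρ :=
    M.acc (fun n => ((ρ n).st.1, (ρ n).a1, (ρ n).a2.1)) ∨
    (¬ M.acc (fun n => ((ρ n).st.2.1, (ρ n).a1, (ρ n).e2.1)) ∧
     ¬ M.acc (fun n => ((ρ n).st.2.2, (ρ n).a1, (ρ n).e2.2)))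

end AltAut

/-! ### Deterministic and nondeterministic parity automata -/

/-- A deterministic parity automaton over the alphabet `A` (priorities on
transitions). -/
structure DPA (A : Type) where
  S : Type
  init : S
  step : S → A → S
  prio : S → A → ℕ

namespace DPA

variable {A : Type}

/-- The (unique) run of `D` on `w`. -/
def run (D : DPA A) (w : ℕ → A) : ℕ → D.S
  | 0 => D.init
  | n + 1 => D.step (D.run w n) (w n)

/-- The language of `D`. -/
def Lang (D : DPA A) : Set (ℕ → A) :=
  {w | ParityAccept fun n => D.prio (D.run w n) (w n)}

end DPA

/-- A nondeterministic parity automaton over the alphabet `A`, with an abstract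
set `T` of transitions, each with a source, a letter, a destination and a
priority. -/
structure NPA (A : Type) where
  S : Type
  init : S
  T : Type
  src : T → S
  lab : T → A
  dst : T → S
  prio : T → ℕ

namespace NPA

variable {A : Type}

/-- `r` is a run of `N` over `w`. -/
def IsRun (N : NPA A) (w : ℕ → A) (r : ℕ → N.T) : Prop :=
  N.src (r 0) = N.init ∧ (∀ n, N.src (r (n+1)) = N.dst (r n)) ∧ ∀ n, N.lab (r n) = w n

/-- The language of `N`: the words admitting an accepting run. -/
def Lang (N : NPA A) : Set (ℕ → A) :=
  {w | ∃ r, N.IsRun w r ∧ ParityAccept fun n => N.prio (r n)}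

/-- The letter game on `N`: Adam picks letters, Eve picks transitions; Eve wins
iff the word played is not in `L(N)` or her run is accepting. -/
def letterGame (N : NPA A) : Game N.S A N.T Unit Unit Unit Unit where
  init := N.init
  A1 _ := Set.univ
  E1 s a := {t | N.src t = s ∧ N.lab t = a}
  A2 _ _ _ := Set.univ
  E2 _ _ _ _ := Set.univ
  A3 _ _ _ _ _ := Set.univ
  E3 _ _ _ _ _ _ := Set.univ
  next _ _ t _ _ _ _ := N.dst t
  win ρ := (fun n => (ρ n).a1) ∉ N.Lang ∨ ParityAccept fun n => N.prio (ρ n).e1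

/-- `N` is good-for-games. -/
def GFG (N : NPA A) : Prop := Game.EveWins N.letterGame

/-- The two-token game `G₂(N)` on a nondeterministic automaton `N`: Adam picks
a letter, Eve picks a transition for her token, Adam picks transitions for his
two tokens.  Eve wins iff her run is accepting or both of Adam's runs are
rejecting. -/
def G2 (N : NPA A) : Game (N.S × N.S × N.S) A N.T (N.T × N.T) Unit Unit Unit where
  init := (N.init, N.init, N.init)
  A1 _ := Set.univ
  E1 c a := {t | N.src t = c.1 ∧ N.lab t = a}
  A2 c a _ := {m | N.src m.1 = c.2.1 ∧ N.lab m.1 = a ∧ N.src m.2 = c.2.2 ∧ N.lab m.2 = a}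
  E2 _ _ _ _ := Set.univ
  A3 _ _ _ _ _ := Set.univ
  E3 _ _ _ _ _ _ := Set.univ
  next _ _ t m _ _ _ := (N.dst t, N.dst m.1, N.dst m.2)
  win ρ :=
    ParityAccept (fun n => N.prio (ρ n).e1) ∨
    (¬ ParityAccept (fun n => N.prio (ρ n).a2.1) ∧
     ¬ ParityAccept (fun n => N.prio (ρ n).a2.2))

end NPA

/-- The nondeterministic parity automaton `A^□` obtained from an alternating
automaton `M` and a deterministic parity automaton `B` over the alphabet of
boxes of `M`: upon reading a letter `a`, it nondeterministically chooses a box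
of `M` over `a` and follows the transition of `B` over that box. -/
def boxNPA {A : Type} (M : AltAut A) (B : DPA M.Boxes) : NPA A where
  S := B.S
  init := B.init
  T := B.S × M.Boxes
  src t := t.1
  lab t := t.2.val.1
  dst t := B.step t.1 t.2
  prio t := B.prio t.1 t.2

/-!
Eve plays her letter game on `M` by feeding the letters to a GFG strategy of `M^□` and resolving
each transition condition by the box that strategy chooses. If the run of `M^□` is accepting, the
chosen box word is universally accepting, so the path Adam builds through it is accepting.
Otherwise the word is not in `L(M^□)`, hence not in `L(M)`: the inclusion `L(M) ⊆ L(M^□)` holds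
because a winning strategy of Eve in the model-checking parity game can be made positional, that
is, given by a sequence of boxes.

Positionality is proved with signatures. For an odd priority `o`, a history `y` is below `x` in
`Descent o` if it extends `x` and `o` is the highest priority in between; this relation is
well-founded since Eve's strategy wins. At each position Eve follows the history whose vector of
ranks is lexicographically least. Along a play of this positional strategy, the vector truncated
at the highest priority `μ` seen infinitely often eventually never increases, and strictly
decreases whenever `μ` is seen, so `μ` cannot be odd.
-/

open Filter OrderDual

theorem Acc.rank_le_rank_of_forall_rel {α : Type*} {r : α → α → Prop} {a b : α}
    (ha : Acc r a) (hb : Acc r b) (h : ∀ c, r c a → r c b) : ha.rank ≤ hb.rank := by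
  rw [ha.rank_eq]
  exact Ordinal.iSup_le fun c => Order.succ_le_of_lt (hb.rank_lt_of_rel (h c c.2))

theorem Pi.toLex_piecewise_le_of_le {ι α : Type*} [LinearOrder ι] [PartialOrder α]
    {s : Set ι} [DecidablePred (· ∈ s)] (hs : IsLowerSet s) (z : ι → α) {x y : ι → α}
    (h : toLex x ≤ toLex y) : toLex (s.piecewise x z) ≤ toLex (s.piecewise y z) := by
  obtain ⟨i, hagree, hlt⟩ | heq := h.lt_or_eq
  · have hagree' : ∀ j < i, x j = y j := hagree
    by_cases hi : i ∈ s
    · refine le_of_lt ⟨i, fun j hj => ?_, ?_⟩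
      · by_cases hj' : j ∈ s <;> simp [Set.piecewise, hj', hagree' j hj]
      · simpa [Set.piecewise, hi] using hlt
    · refine le_of_eq (congrArg toLex (funext fun j => ?_))
      by_cases hj : j ∈ s
      · simp [Set.piecewise, hj, hagree' j (lt_of_not_ge fun hij => hi (hs hij hj))]
      · simp [Set.piecewise, hj]
  · rw [toLex_inj.1 heq]

theorem not_frequently_succ_lt_of_eventually_succ_le {α : Type*} [PartialOrder α]
    [WellFoundedLT α] {s : ℕ → α} (h : ∀ᶠ n in atTop, s (n + 1) ≤ s n) :
    ¬ ∃ᶠ n in atTop, s (n + 1) < s n := by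
  obtain ⟨N, hN⟩ := eventually_atTop.1 h
  set m := Function.argminOn s (Set.Ici N) ⟨N, Set.self_mem_Ici⟩
  have hNm : N ≤ m := Function.argminOn_mem s (Set.Ici N) _
  have hconst : ∀ n, m ≤ n → s n = s m := fun n hn =>
    (antitoneOn_nat_Ici_of_succ_le hN hNm (hNm.trans hn) hn).lt_or_eq.resolve_left
      (Function.not_lt_argminOn s _ (show N ≤ n by omega))
  rw [not_frequently]
  filter_upwards [eventually_ge_atTop m] with n hn
  rw [hconst n hn, hconst (n + 1) (by omega)]
  exact lt_irrefl _

theorem exists_limit_of_agree {α : Type*} {g : ℕ → ℕ → α} {n : ℕ → ℕ} (hn : StrictMono n)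
    (h : ∀ m, ∀ i ≤ n m, g (m + 1) i = g m i) : ∃ G : ℕ → α, ∀ m, ∀ i ≤ n m, G i = g m i := by
  have hk : ∀ m k, m ≤ k → ∀ i ≤ n m, g k i = g m i := by
    intro m k hmk
    induction k, hmk using Nat.le_induction with
    | base => exact fun _ _ => rfl
    | succ k hmk ih => exact fun i hi => (h k i (hi.trans (hn.monotone hmk))).trans (ih i hi)
  refine ⟨fun i => g i i, fun m i hi => ?_⟩
  rcases le_total m i with hmi | him
  · exact hk m i hmi i hi
  · exact (hk i m him i hn.le_apply).symm

theorem infOften_iff_frequently {f : ℕ → ℕ} {c : ℕ} : InfOften f c ↔ ∃ᶠ n in atTop, f n = c :=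
  frequently_atTop.symm

theorem not_parityAccept_of_odd {f : ℕ → ℕ} {o : ℕ} (ho : Odd o) (hinf : InfOften f o)
    (hle : ∀ᶠ n in atTop, f n ≤ o) : ¬ ParityAccept f := by
  rintro ⟨c, hc, hcinf, hmax⟩
  obtain ⟨n, rfl, hn⟩ := ((infOften_iff_frequently.1 hcinf).and_eventually hle).exists
  obtain rfl := le_antisymm hn (hmax o hinf)
  exact Nat.not_even_iff_odd.2 ho hc

theorem exists_odd_of_not_parityAccept {f : ℕ → ℕ} {P : ℕ} (hP : ∀ n, f n ≤ P)
    (h : ¬ ParityAccept f) : ∃ μ, Odd μ ∧ InfOften f μ ∧ ∀ᶠ n in atTop, f n ≤ μ := by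
  classical
  have hle : ∀ d, InfOften f d → d ≤ P := fun d hd => by
    obtain ⟨n, -, rfl⟩ := hd 0
    exact hP n
  obtain ⟨d, hd⟩ : ∃ d, InfOften f d := by
    have : ∃ᶠ n in atTop, ∃ d ∈ Finset.range (P + 1), f n = d :=
      Frequently.of_forall fun n => ⟨f n, Finset.mem_range.2 (Nat.lt_succ_of_le (hP n)), rfl⟩
    obtain ⟨d, -, hd⟩ := Filter.frequently_exists_finset _ |>.1 this
    exact ⟨d, infOften_iff_frequently.2 hd⟩
  set μ := Nat.findGreatest (InfOften f) P
  have hμ : InfOften f μ := Nat.findGreatest_spec (hle d hd) hd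
  have hmax : ∀ d, InfOften f d → d ≤ μ := fun d hd => Nat.le_findGreatest (hle d hd) hd
  refine ⟨μ, Nat.not_even_iff_odd.1 fun he => h ⟨μ, he, hμ, hmax⟩, hμ, ?_⟩
  have hrare : ∀ᶠ n in atTop, ∀ d ∈ Finset.Ioc μ P, f n ≠ d := by
    refine (eventually_all_finset _).2 fun d hd => ?_
    rw [← not_frequently, ← infOften_iff_frequently]
    exact fun hinf => absurd (hmax d hinf) (not_le.2 (Finset.mem_Ioc.1 hd).1)
  filter_upwards [hrare] with n hn
  by_contra hlt
  exact hn (f n) (Finset.mem_Ioc.2 ⟨not_le.1 hlt, hP n⟩) rfl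

section Positional

variable {Q : Type} {init : Q} {Ch : (ℕ → Q) → ℕ → Set Q} {pr : ℕ → Q → Q → ℕ}

-- A history of length `n` is encoded as `(g, n)`; the values `g i` for `i > n` are irrelevant.
variable (init Ch) in
def Follows (g : ℕ → Q) (n : ℕ) : Prop :=
  g 0 = init ∧ ∀ i < n, g (i + 1) ∈ Ch g i

variable (init Ch pr) in
def Descent (o : ℕ) (y x : (ℕ → Q) × ℕ) : Prop :=
  Odd o ∧ Follows init Ch y.1 y.2 ∧ x.2 < y.2 ∧ (∀ i ≤ x.2, y.1 i = x.1 i) ∧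
    (∀ i, x.2 ≤ i → i < y.2 → pr i (y.1 i) (y.1 (i + 1)) ≤ o) ∧
    ∃ i, x.2 ≤ i ∧ i < y.2 ∧ pr i (y.1 i) (y.1 (i + 1)) = o

def extendAt (g : ℕ → Q) (n : ℕ) (q : Q) : ℕ → Q := fun i => if i ≤ n then g i else q

theorem extendAt_of_le {g : ℕ → Q} {n i : ℕ} (q : Q) (hi : i ≤ n) : extendAt g n q i = g i :=
  if_pos hi

theorem extendAt_of_lt {g : ℕ → Q} {n i : ℕ} (q : Q) (hi : n < i) : extendAt g n q i = q :=
  if_neg (not_le.2 hi)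

theorem Descent.of_extendAt {o : ℕ} {z : (ℕ → Q) × ℕ} {g : ℕ → Q} {n : ℕ} {q : Q}
    (h : Descent init Ch pr o z (extendAt g n q, n + 1)) (hpr : pr n (g n) q ≤ o) :
    Descent init Ch pr o z (g, n) := by
  obtain ⟨ho, hz, hlt, hagree, hle, i, hi, hi', hio⟩ := h
  simp only at hlt hagree hle hi hi'
  have hagree' : ∀ i ≤ n, z.1 i = g i := fun i hi =>
    (hagree i (by omega)).trans (extendAt_of_le q hi)
  refine ⟨ho, hz, by omega, hagree', fun j hj hj' => ?_, i, by omega, hi', hio⟩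
  rcases (show j = n ∨ n + 1 ≤ j by omega) with rfl | hj
  · rw [hagree' j le_rfl, hagree (j + 1) le_rfl, extendAt_of_lt q (Nat.lt_succ_self j)]
    exact hpr
  · exact hle j hj hj'

section Causal

variable (hcausal : ∀ g g' n, (∀ i ≤ n, g i = g' i) → Ch g n = Ch g' n)
include hcausal

theorem Follows.congr {g g' : ℕ → Q} {n : ℕ} (h : Follows init Ch g n)
    (hg : ∀ i ≤ n, g' i = g i) : Follows init Ch g' n := by
  refine ⟨(hg 0 (Nat.zero_le n)).trans h.1, fun i hi => ?_⟩
  rw [hg (i + 1) hi, hcausal g' g i fun j hj => hg j (by omega)]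
  exact h.2 i hi

theorem Follows.extendAt {g : ℕ → Q} {n : ℕ} {q : Q} (h : Follows init Ch g n)
    (hq : q ∈ Ch g n) : Follows init Ch (_root_.extendAt g n q) (n + 1) := by
  have hagree : ∀ i ≤ n, _root_.extendAt g n q i = g i := fun i hi => extendAt_of_le q hi
  have h' := h.congr hcausal hagree
  refine ⟨h'.1, fun i hi => ?_⟩
  rcases Nat.lt_succ_iff_lt_or_eq.1 hi with hi | rfl
  · exact h'.2 i hi
  · rw [extendAt_of_lt q (Nat.lt_succ_self i), hcausal _ g i hagree]
    exact hq

theorem descent_extendAt {o : ℕ} (ho : Odd o) {g : ℕ → Q} {n : ℕ} {q : Q}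
    (hg : Follows init Ch g n) (hq : q ∈ Ch g n) (hpr : pr n (g n) q = o) :
    Descent init Ch pr o (extendAt g n q, n + 1) (g, n) := by
  have hstep : pr n (extendAt g n q n) (extendAt g n q (n + 1)) = o := by
    rw [extendAt_of_le q le_rfl, extendAt_of_lt q (Nat.lt_succ_self n), hpr]
  refine ⟨ho, hg.extendAt hcausal hq, Nat.lt_succ_self n, fun i hi => extendAt_of_le q hi,
    fun i hi hi' => ?_, n, le_rfl, Nat.lt_succ_self n, hstep⟩
  obtain rfl : i = n := by simp only at hi hi'; omega
  exact hstep.le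

theorem descent_wellFounded
    (hwin : ∀ g, g 0 = init → (∀ n, g (n + 1) ∈ Ch g n) →
      ParityAccept fun n => pr n (g n) (g (n + 1)))
    (o : ℕ) : WellFounded (Descent init Ch pr o) := by
  refine wellFounded_iff_isEmpty_descending_chain.2 ⟨fun ⟨x, hx⟩ => ?_⟩
  have hn : StrictMono fun m => (x m).2 := strictMono_nat_of_lt_succ fun m => (hx m).2.2.1
  obtain ⟨G, hG⟩ := exists_limit_of_agree (g := fun m => (x m).1) hn fun m => (hx m).2.2.2.1
  have hfollows : ∀ m, Follows init Ch G (x (m + 1)).2 := fun m =>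
    (hx m).2.1.congr hcausal (hG (m + 1))
  have hpr : ∀ m i, i < (x (m + 1)).2 →
      pr i (G i) (G (i + 1)) = pr i ((x (m + 1)).1 i) ((x (m + 1)).1 (i + 1)) := fun m i hi => by
    rw [hG (m + 1) i hi.le, hG (m + 1) (i + 1) hi]
  have hplay : ∀ i, G (i + 1) ∈ Ch G i := fun i => (hfollows i).2 i hn.le_apply
  refine not_parityAccept_of_odd (hx 0).1 (fun N => ?_) ?_ (hwin G (hfollows 0).1 hplay)
  · obtain ⟨i, hNi, hi, hio⟩ := (hx N).2.2.2.2.2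
    exact ⟨i, hn.le_apply.trans hNi, (hpr N i hi).trans hio⟩
  · filter_upwards [eventually_ge_atTop (x 0).2] with i hi
    obtain ⟨m, hm, hm'⟩ := hn.exists_between_of_tendsto_atTop hn.tendsto_atTop
      (Nat.lt_succ_of_le hi)
    rw [hpr m i hm']
    exact (hx m).2.2.2.2.1 i (Nat.lt_succ_iff.1 hm) hm'

end Causal

section Signature

variable (P : ℕ) (hwf : ∀ o, WellFounded (Descent init Ch pr o))

-- Indexing by `(Fin (P + 1))ᵒᵈ` makes the lexicographic order compare the highest priority first.
noncomputable def descentRanks (x : (ℕ → Q) × ℕ) : (Fin (P + 1))ᵒᵈ → Ordinal :=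
  fun o => ((hwf (ofDual o : Fin (P + 1))).apply x).rank

noncomputable def signatureFrom (μ : ℕ) (x : (ℕ → Q) × ℕ) : Lex ((Fin (P + 1))ᵒᵈ → Ordinal) :=
  toLex ({o : (Fin (P + 1))ᵒᵈ | μ ≤ ((ofDual o : Fin (P + 1)) : ℕ)}.piecewise
    (descentRanks P hwf x) 0)

variable {P hwf}

theorem signatureFrom_le_of_le {x y : (ℕ → Q) × ℕ} (μ : ℕ)
    (h : toLex (descentRanks P hwf x) ≤ toLex (descentRanks P hwf y)) :
    signatureFrom P hwf μ x ≤ signatureFrom P hwf μ y :=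
  Pi.toLex_piecewise_le_of_le (s := {o : (Fin (P + 1))ᵒᵈ | μ ≤ ((ofDual o : Fin (P + 1)) : ℕ)})
    (fun _ _ hab (ha : μ ≤ _) => ha.trans hab) 0 h

theorem descentRanks_extendAt_le {o : (Fin (P + 1))ᵒᵈ} {g : ℕ → Q} {n : ℕ} {q : Q}
    (hpr : pr n (g n) q ≤ (ofDual o : Fin (P + 1))) :
    descentRanks P hwf (extendAt g n q, n + 1) o ≤ descentRanks P hwf (g, n) o :=
  Acc.rank_le_rank_of_forall_rel _ _ fun _ hz => hz.of_extendAt hpr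

theorem signatureFrom_extendAt_le {μ : ℕ} {g : ℕ → Q} {n : ℕ} {q : Q}
    (hpr : pr n (g n) q ≤ μ) :
    signatureFrom P hwf μ (extendAt g n q, n + 1) ≤ signatureFrom P hwf μ (g, n) :=
  Pi.toLex_monotone <| Set.piecewise_mono
    (fun _ ho => descentRanks_extendAt_le (hpr.trans ho)) fun _ _ => le_rfl

theorem signatureFrom_extendAt_lt
    (hcausal : ∀ g g' n, (∀ i ≤ n, g i = g' i) → Ch g n = Ch g' n)
    {μ : ℕ} (hμ : Odd μ) (hμP : μ ≤ P) {g : ℕ → Q} {n : ℕ} {q : Q}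
    (hg : Follows init Ch g n) (hq : q ∈ Ch g n) (hpr : pr n (g n) q = μ) :
    signatureFrom P hwf μ (extendAt g n q, n + 1) < signatureFrom P hwf μ (g, n) := by
  refine Pi.toLex_strictMono (Pi.lt_def.2 ⟨Set.piecewise_mono
    (fun _ ho => descentRanks_extendAt_le (hpr.trans_le ho)) fun _ _ => le_rfl,
    toDual ⟨μ, Nat.lt_succ_of_le hμP⟩, ?_⟩)
  simp only [Set.piecewise, Set.mem_ofPred_eq, ofDual_toDual, le_rfl, if_true, descentRanks]
  exact (hwf μ).apply _ |>.rank_lt_of_rel (descent_extendAt hcausal hμ hg hq hpr)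

variable (P hwf) in
open Classical in
noncomputable def bestHistory (n : ℕ) (q : Q) : ℕ → Q :=
  if h : ∃ g, Follows init Ch g n ∧ g n = q then
    Function.argminOn (fun g => toLex (descentRanks P hwf (g, n)))
      {g | Follows init Ch g n ∧ g n = q} h
  else fun _ => q

theorem bestHistory_spec {g : ℕ → Q} {n : ℕ} (hg : Follows init Ch g n) :
    Follows init Ch (bestHistory P hwf n (g n)) n ∧ bestHistory P hwf n (g n) n = g n ∧
      toLex (descentRanks P hwf (bestHistory P hwf n (g n), n)) ≤
        toLex (descentRanks P hwf (g, n)) := by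
  have hmem := Function.argminOn_mem (fun g => toLex (descentRanks P hwf (g, n)))
    {g' | Follows init Ch g' n ∧ g' n = g n} ⟨g, hg, rfl⟩
  rw [bestHistory, dif_pos ⟨g, hg, rfl⟩]
  exact ⟨hmem.1, hmem.2, Function.argminOn_le (fun g => toLex (descentRanks P hwf (g, n))) _
    (show g ∈ {g' | Follows init Ch g' n ∧ g' n = g n} from ⟨hg, rfl⟩)⟩

theorem parityAccept_of_forall_mem_bestHistory
    (hcausal : ∀ g g' n, (∀ i ≤ n, g i = g' i) → Ch g n = Ch g' n)
    (hP : ∀ n q q', pr n q q' ≤ P) {g : ℕ → Q}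
    (hreach : ∀ n, ∃ g', Follows init Ch g' n ∧ g' n = g n)
    (hstep : ∀ n, g (n + 1) ∈ Ch (bestHistory P hwf n (g n)) n) :
    ParityAccept fun n => pr n (g n) (g (n + 1)) := by
  by_contra hrej
  obtain ⟨μ, hμ, hinf, hle⟩ := exists_odd_of_not_parityAccept (fun n => hP n _ _) hrej
  have hμP : μ ≤ P := by
    obtain ⟨m, -, hm⟩ := hinf 0
    exact hm ▸ hP _ _ _
  set b := fun n => bestHistory P hwf n (g n)
  have hb : ∀ n, Follows init Ch (b n) n ∧ b n n = g n := fun n => by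
    obtain ⟨g', hg', hg'n⟩ := hreach n
    have hspec := bestHistory_spec (P := P) (hwf := hwf) hg'
    rw [hg'n] at hspec
    exact ⟨hspec.1, hspec.2.1⟩
  have hpr : ∀ n, pr n (b n n) (g (n + 1)) = pr n (g n) (g (n + 1)) := fun n => by rw [(hb n).2]
  have hnext : ∀ n, signatureFrom P hwf μ (b (n + 1), n + 1) ≤
      signatureFrom P hwf μ (extendAt (b n) n (g (n + 1)), n + 1) := fun n => by
    have hspec := (bestHistory_spec (P := P) (hwf := hwf) ((hb n).1.extendAt hcausal (hstep n))).2.2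
    rw [extendAt_of_lt _ (Nat.lt_succ_self n)] at hspec
    exact signatureFrom_le_of_le μ hspec
  refine not_frequently_succ_lt_of_eventually_succ_le
    (s := fun n => signatureFrom P hwf μ (b n, n)) ?_ ?_
  · filter_upwards [hle] with n hn
    exact (hnext n).trans (signatureFrom_extendAt_le ((hpr n).trans_le hn))
  · exact (infOften_iff_frequently.1 hinf).mono fun n hn => (hnext n).trans_lt
      (signatureFrom_extendAt_lt hcausal hμ hμP (hb n).1 (hstep n) ((hpr n).trans hn))

end Signature

theorem exists_positional_strategy (P : ℕ) (hP : ∀ n q q', pr n q q' ≤ P)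
    (hcausal : ∀ g g' n, (∀ i ≤ n, g i = g' i) → Ch g n = Ch g' n)
    (E : ℕ → Q → Set (Set Q)) (hE : ∀ n q, (E n q).Nonempty)
    (hChE : ∀ g n, Follows init Ch g n → Ch g n ∈ E n (g n))
    (hwin : ∀ g, g 0 = init → (∀ n, g (n + 1) ∈ Ch g n) →
      ParityAccept fun n => pr n (g n) (g (n + 1))) :
    ∃ b : ℕ → Q → Set Q, (∀ n q, b n q ∈ E n q) ∧
      ∀ g : ℕ → Q, g 0 = init → (∀ n, g (n + 1) ∈ b n (g n)) →
        ParityAccept fun n => pr n (g n) (g (n + 1)) := by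
  classical
  have hwf := descent_wellFounded hcausal hwin
  let Reach n q := ∃ g, Follows init Ch g n ∧ g n = q
  refine ⟨fun n q => if Reach n q then Ch (bestHistory P hwf n q) n else (hE n q).some,
    fun n q => ?_, fun g hg0 hg => ?_⟩
  · dsimp only
    split_ifs with h
    · obtain ⟨g, hg, rfl⟩ := h
      obtain ⟨hfollows, hlast, -⟩ := bestHistory_spec (P := P) (hwf := hwf) hg
      have hmem := hChE _ n hfollows
      rwa [hlast] at hmem
    · exact (hE n q).some_mem
  have hstep : ∀ n, Reach n (g n) → g (n + 1) ∈ Ch (bestHistory P hwf n (g n)) n :=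
    fun n h => by simpa only [if_pos h] using hg n
  have hreach : ∀ n, Reach n (g n) := by
    intro n
    induction n with
    | zero => exact ⟨g, ⟨hg0, fun _ h => absurd h (Nat.not_lt_zero _)⟩, rfl⟩
    | succ n ih =>
      obtain ⟨g', hg', hg'n⟩ := ih
      have hfollows := (bestHistory_spec (P := P) (hwf := hwf) hg').1
      rw [hg'n] at hfollows
      exact ⟨_, hfollows.extendAt hcausal (hstep n ⟨g', hg', hg'n⟩),
        extendAt_of_lt _ (Nat.lt_succ_self n)⟩
  exact parityAccept_of_forall_mem_bestHistory hcausal hP hreach fun n => hstep n (hreach n)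

end Positional

namespace Game

section Legality

variable {St α1 β1 α2 β2 α3 β3 : Type} {G : Game St α1 β1 α2 β2 α3 β3}
  {ρ : ℕ → GameRound St α1 β1 α2 β2 α3 β3}

theorem EveWinsPlay.hleg (hw : G.EveWinsPlay ρ) (hA1 : ∀ n, (ρ n).a1 ∈ G.A1 (ρ n).st)
    (hA3 : ∀ n, (ρ n).a3 ∈ G.A3 (ρ n).st (ρ n).a1 (ρ n).e1 (ρ n).a2 (ρ n).e2) {N : ℕ}
    (hA2 : ∀ n < N, (ρ n).a2 ∈ G.A2 (ρ n).st (ρ n).a1 (ρ n).e1) : G.Hleg ρ N := by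
  induction N with
  | zero => exact fun m hm => absurd hm (Nat.not_lt_zero m)
  | succ N ih =>
    have hleg := ih fun n hn => hA2 n (Nat.lt_succ_of_lt hn)
    have he1 := hw.1 N hleg (hA1 N)
    have ha2 := hA2 N (Nat.lt_succ_self N)
    have he2 := hw.2.1 N hleg (hA1 N) he1 ha2
    have hround : G.RoundLegal ρ N :=
      ⟨hA1 N, he1, ha2, he2, hA3 N, hw.2.2.1 N hleg (hA1 N) he1 ha2 he2 (hA3 N)⟩
    exact fun m hm => (Nat.lt_succ_iff_lt_or_eq.1 hm).elim (hleg m) fun h => h ▸ hround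

theorem EveWinsPlay.roundLegal (hw : G.EveWinsPlay ρ) (hA1 : ∀ n, (ρ n).a1 ∈ G.A1 (ρ n).st)
    (hA2 : ∀ n, (ρ n).a2 ∈ G.A2 (ρ n).st (ρ n).a1 (ρ n).e1)
    (hA3 : ∀ n, (ρ n).a3 ∈ G.A3 (ρ n).st (ρ n).a1 (ρ n).e1 (ρ n).a2 (ρ n).e2) (n : ℕ) :
    G.RoundLegal ρ n :=
  hw.hleg hA1 hA3 (fun m _ => hA2 m) n (Nat.lt_succ_self n)

end Legality

section Replay

variable {St α1 β1 α2 : Type} (G : Game St α1 β1 α2 Unit Unit Unit)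
  (σ : EStrat St α1 β1 α2 Unit Unit Unit)

def roundOf (hs : List (GameRound St α1 β1 α2 Unit Unit Unit)) (s : St) (a : α1 × α2) :
    GameRound St α1 β1 α2 Unit Unit Unit :=
  ⟨s, a.1, σ.f1 hs s a.1, a.2, (), (), ()⟩

def replay (moves : List (α1 × α2)) : St × List (GameRound St α1 β1 α2 Unit Unit Unit) :=
  moves.foldl (fun c a => let r := roundOf σ c.2 c.1 a
    (G.next r.st r.a1 r.e1 r.a2 () () (), c.2 ++ [r])) (G.init, [])

def playAgainst (moves : ℕ → α1 × α2) (n : ℕ) : GameRound St α1 β1 α2 Unit Unit Unit :=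
  roundOf σ (G.replay σ ((List.range n).map moves)).2 (G.replay σ ((List.range n).map moves)).1
    (moves n)

variable (moves : ℕ → α1 × α2)

theorem replay_range_succ (n : ℕ) :
    G.replay σ ((List.range (n + 1)).map moves) =
      (G.next (G.playAgainst σ moves n).st (G.playAgainst σ moves n).a1
          (G.playAgainst σ moves n).e1 (G.playAgainst σ moves n).a2 () () (),
        (G.replay σ ((List.range n).map moves)).2 ++ [G.playAgainst σ moves n]) := by
  rw [List.range_succ, List.map_append, List.map_singleton, replay, List.foldl_concat]
  rfl

theorem hist_playAgainst (n : ℕ) :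
    hist (G.playAgainst σ moves) n = (G.replay σ ((List.range n).map moves)).2 := by
  induction n with
  | zero => rfl
  | succ n ih =>
    rw [replay_range_succ, ← ih, hist, hist, List.range_succ, List.map_append,
      List.map_singleton]

theorem stateOk_playAgainst : G.StateOk (G.playAgainst σ moves) :=
  ⟨rfl, fun n => congrArg Prod.fst (G.replay_range_succ σ moves n)⟩

theorem consE_playAgainst : ConsE σ (G.playAgainst σ moves) := fun n =>
  ⟨by rw [hist_playAgainst]; rfl, Subsingleton.elim _ _, Subsingleton.elim _ _⟩

end Replay

end Game

theorem PosBool.eveRes_nonempty {Q : Type} (φ : PosBool Q) : φ.eveRes.Nonempty := by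
  induction φ with
  | atom q => exact ⟨{q}, rfl⟩
  | and f g ihf ihg =>
    obtain ⟨u, hu⟩ := ihf
    obtain ⟨v, hv⟩ := ihg
    exact ⟨u ∪ v, u, hu, v, hv, rfl⟩
  | or f g ihf ihg =>
    obtain ⟨u, hu⟩ := ihf
    exact ⟨u, Or.inl hu⟩

namespace AltAut

section ModelChecking

variable {A : Type} (M : AltAut A) (w : ℕ → A)
  (σ : Game.EStrat (ℕ × M.Q) Unit (Set M.Q) M.Q Unit Unit Unit)

def mcMoves (g : ℕ → M.Q) (n : ℕ) : Unit × M.Q := ((), g (n + 1))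

def mcChoice (g : ℕ → M.Q) (n : ℕ) : Set M.Q :=
  ((M.mcGame w).playAgainst σ (mcMoves M g) n).e1

variable {M w σ}

theorem mcChoice_congr {g g' : ℕ → M.Q} {n : ℕ} (h : ∀ i ≤ n, g i = g' i) :
    M.mcChoice w σ g n = M.mcChoice w σ g' n := by
  have hmoves : (List.range n).map (mcMoves M g) = (List.range n).map (mcMoves M g') :=
    List.map_congr_left fun i hi => by
      rw [mcMoves, mcMoves, h (i + 1) (List.mem_range.1 hi)]
  unfold mcChoice Game.playAgainst
  rw [hmoves]
  rfl

theorem mcGame_playAgainst_st {g : ℕ → M.Q} (hg0 : g 0 = M.init) (n : ℕ) :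
    ((M.mcGame w).playAgainst σ (mcMoves M g) n).st = (n, g n) := by
  induction n with
  | zero => rw [hg0]; rfl
  | succ n ih =>
    rw [((M.mcGame w).stateOk_playAgainst σ (mcMoves M g)).2 n, ih]
    rfl

variable (hσ : (M.mcGame w).EveWinningStrat σ)
include hσ

theorem eveWinsPlay_mcMoves (g : ℕ → M.Q) :
    (M.mcGame w).EveWinsPlay ((M.mcGame w).playAgainst σ (mcMoves M g)) :=
  hσ _ ((M.mcGame w).stateOk_playAgainst σ _) ((M.mcGame w).consE_playAgainst σ _)

theorem mcChoice_mem_eveRes {g : ℕ → M.Q} {n : ℕ} (hg : Follows M.init (M.mcChoice w σ) g n) :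
    M.mcChoice w σ g n ∈ (M.delta (g n) (w n)).eveRes := by
  have hw := eveWinsPlay_mcMoves hσ g
  have hleg := hw.hleg (fun _ => trivial) (fun _ => trivial) fun i hi => hg.2 i hi
  have he1 := hw.1 n hleg trivial
  rwa [mcGame_playAgainst_st hg.1] at he1

theorem acc_of_forall_mem_mcChoice {g : ℕ → M.Q} (hg0 : g 0 = M.init)
    (hg : ∀ n, g (n + 1) ∈ M.mcChoice w σ g n) : M.acc fun n => (g n, w n, g (n + 1)) := by
  have hw := eveWinsPlay_mcMoves hσ g
  have hpath : (fun n => (g n, w n, g (n + 1))) = fun n =>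
      (((M.mcGame w).playAgainst σ (mcMoves M g) n).st.2, w n,
        ((M.mcGame w).playAgainst σ (mcMoves M g) n).a2) :=
    funext fun n => by rw [mcGame_playAgainst_st hg0]; rfl
  rw [hpath]
  exact hw.2.2.2 (hw.roundLegal (fun _ => trivial) hg fun _ => trivial)

end ModelChecking

end AltAut

theorem NPA.roundLegal_of_eveWinsPlay {A : Type} {N : NPA A}
    {ρ : ℕ → GameRound N.S A N.T Unit Unit Unit Unit} (hw : N.letterGame.EveWinsPlay ρ) (n : ℕ) :
    N.letterGame.RoundLegal ρ n :=
  hw.roundLegal (fun _ => trivial) (fun _ => trivial) (fun _ => trivial) n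

theorem NPA.isRun_of_eveWinsPlay {A : Type} {N : NPA A}
    {ρ : ℕ → GameRound N.S A N.T Unit Unit Unit Unit} (hst : N.letterGame.StateOk ρ)
    (hw : N.letterGame.EveWinsPlay ρ) : N.IsRun (fun n => (ρ n).a1) fun n => (ρ n).e1 :=
  ⟨(roundLegal_of_eveWinsPlay hw 0).2.1.1.trans hst.1,
    fun n => (roundLegal_of_eveWinsPlay hw (n + 1)).2.1.1.trans (hst.2 n),
    fun n => (roundLegal_of_eveWinsPlay hw n).2.1.2⟩

section BoxNPA

variable {Alph : Type} {M : AltAut Alph} {B : DPA M.Boxes}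

theorem boxNPA_letters_mem_lang {u : ℕ → M.Boxes} (hu : u ∈ B.Lang) :
    (fun n => (u n).val.1) ∈ (boxNPA M B).Lang :=
  ⟨fun n => (B.run u n, u n), ⟨rfl, fun _ => rfl, fun _ => rfl⟩, hu⟩

theorem boxNPA_isRun_fst {w : ℕ → Alph} {r : ℕ → (boxNPA M B).T}
    (hr : (boxNPA M B).IsRun w r) (n : ℕ) : (r n).1 = B.run (fun k => (r k).2) n := by
  induction n with
  | zero => exact hr.1
  | succ n ih => rw [DPA.run, ← ih]; exact hr.2.1 n

theorem boxes_mem_lang_of_isRun {w : ℕ → Alph} {r : ℕ → (boxNPA M B).T}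
    (hr : (boxNPA M B).IsRun w r) (hacc : ParityAccept fun n => (boxNPA M B).prio (r n)) :
    (fun n => (r n).2) ∈ B.Lang := by
  have hprio : (fun n => (boxNPA M B).prio (r n)) =
      fun n => B.prio (B.run (fun k => (r k).2) n) (r n).2 :=
    funext fun n => by rw [← boxNPA_isRun_fst hr]; rfl
  rw [hprio] at hacc
  exact hacc

theorem lang_subset_boxNPA_lang [Finite Alph] [Finite M.Q] {p : M.Q → Alph → M.Q → ℕ}
    (hp : M.IsParity p) (hB : B.Lang = M.UnivAccLang) : M.Lang ⊆ (boxNPA M B).Lang := by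
  rintro w ⟨σ, hσ⟩
  obtain ⟨P, hP⟩ : ∃ P, ∀ q a q', p q a q' ≤ P := by
    obtain ⟨P, hP⟩ := (Set.finite_range fun x : M.Q × Alph × M.Q => p x.1 x.2.1 x.2.2).bddAbove
    exact ⟨P, fun q a q' => hP ⟨(q, a, q'), rfl⟩⟩
  obtain ⟨b, hbox, hacc⟩ := exists_positional_strategy (pr := fun n q q' => p q (w n) q') P
    (fun _ _ _ => hP _ _ _) (fun _ _ _ => AltAut.mcChoice_congr)
    (fun n q => (M.delta q (w n)).eveRes) (fun _ _ => PosBool.eveRes_nonempty _)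
    (fun _ _ hg => AltAut.mcChoice_mem_eveRes hσ hg)
    fun _ hg0 hg => (hp _).1 (AltAut.acc_of_forall_mem_mcChoice hσ hg0 hg)
  let u : ℕ → M.Boxes := fun n => ⟨(w n, b n), hbox n⟩
  have hu : u ∈ B.Lang := hB ▸ fun ρ h0 hstep => (hp _).2 (hacc ρ h0 hstep)
  exact boxNPA_letters_mem_lang hu

variable (M B) in
def boxStrategy (σN : Game.EStrat B.S Alph (B.S × M.Boxes) Unit Unit Unit Unit) :
    Game.EStrat M.Q Alph (Set M.Q) M.Q Unit Unit Unit where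
  f1 hs q a :=
    let c := (boxNPA M B).letterGame.replay σN (hs.map fun r => (r.a1, ()))
    (σN.f1 c.2 c.1 a).2.val.2 q
  f2 _ _ _ _ _ := ()
  f3 _ _ _ _ _ _ _ := ()

theorem boxStrategy_e1 {σN : Game.EStrat B.S Alph (B.S × M.Boxes) Unit Unit Unit Unit}
    {ρ : ℕ → GameRound M.Q Alph (Set M.Q) M.Q Unit Unit Unit}
    (hcons : Game.ConsE (boxStrategy M B σN) ρ) (n : ℕ) :
    (ρ n).e1 = (((boxNPA M B).letterGame.playAgainst σN (fun k => ((ρ k).a1, ())) n).e1).2.val.2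
      (ρ n).st := by
  rw [(hcons n).1]
  simp only [boxStrategy, Game.hist, List.map_map]
  rfl

theorem AltAut.acc_of_mem_univAccLang
    {ρ : ℕ → GameRound M.Q Alph (Set M.Q) M.Q Unit Unit Unit} (hst : M.eLetterGame.StateOk ρ)
    (hleg : ∀ n, M.eLetterGame.RoundLegal ρ n) {u : ℕ → M.Boxes} (hu : u ∈ M.UnivAccLang)
    (hletter : ∀ n, (u n).val.1 = (ρ n).a1) (he1 : ∀ n, (ρ n).e1 = (u n).val.2 (ρ n).st) :
    M.acc fun n => ((ρ n).st, (ρ n).a1, (ρ n).a2) := by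
  have hnext : ∀ n, (ρ (n + 1)).st = (ρ n).a2 := hst.2
  have hpath := hu (fun n => (ρ n).st) hst.1 fun n => by
    rw [hnext n, ← he1 n]
    exact (hleg n).2.2.1
  have hfun : (fun n => ((ρ n).st, (u n).val.1, (ρ (n + 1)).st)) =
      fun n => ((ρ n).st, (ρ n).a1, (ρ n).a2) :=
    funext fun n => by rw [hletter n, hnext n]
  rwa [← hfun]

end BoxNPA

theorem existsGFG_of_boxNPA_GFG
    (Alph : Type) (M : AltAut Alph) [Finite Alph] [Finite M.Q]
    (p : M.Q → Alph → M.Q → ℕ) (hp : M.IsParity p)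
    (B : DPA M.Boxes) (hB : B.Lang = M.UnivAccLang)
    (hGFG : (boxNPA M B).GFG) :
    M.ExistsGFG := by
  obtain ⟨σN, hσN⟩ := hGFG
  refine ⟨boxStrategy M B σN, fun ρ hst hcons => ?_⟩
  set ρB := (boxNPA M B).letterGame.playAgainst σN fun n => ((ρ n).a1, ())
  have hstB := (boxNPA M B).letterGame.stateOk_playAgainst σN fun n => ((ρ n).a1, ())
  have hwB : (boxNPA M B).letterGame.EveWinsPlay ρB :=
    hσN _ hstB ((boxNPA M B).letterGame.consE_playAgainst σN _)
  have hrun : (boxNPA M B).IsRun (fun n => (ρ n).a1) fun n => (ρB n).e1 :=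
    NPA.isRun_of_eveWinsPlay hstB hwB
  have he1 : ∀ n, (ρ n).e1 = ((ρB n).e1).2.val.2 (ρ n).st := boxStrategy_e1 hcons
  refine ⟨fun n _ _ => ?_, fun _ _ _ _ _ => trivial, fun _ _ _ _ _ _ _ => trivial, fun hleg => ?_⟩
  · have hletter : ((ρB n).e1).2.val.1 = (ρ n).a1 := hrun.2.2 n
    rw [he1 n]
    exact hletter ▸ ((ρB n).e1).2.property (ρ n).st
  rcases hwB.2.2.2 (NPA.roundLegal_of_eveWinsPlay hwB) with hnot | hacc
  · exact Or.inl fun hw => hnot (lang_subset_boxNPA_lang hp hB hw)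
  · exact Or.inr <| AltAut.acc_of_mem_univAccLang hst hleg (hB ▸ boxes_mem_lang_of_isRun hrun hacc)
      hrun.2.2 he1
end

section
/- Let A be a GFG alternating parity automaton, A^□ and (Ā)^□ nondeterministic parity GFG automata recognising L(A) and its complement respectively, σ a positional winning strategy for Eve in the game G(A), and τ a positional winning strategy for Adam in the game G'(A). Let D be the deterministic parity automaton whose states are triples (q, p₁, p₂) with q a state of A, p₁ a state of A^□ and p₂ a state of (Ā)^□, whose transition over a letter a moves to (q', p₁', p₂') where the move from (q, p₁) to (q', p₁') is consistent with τ and the move from (q, p₂) to (q', p₂') is consistent with σ, and whose acceptance condition is inherited from A. Then L(D) = L(A). -/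
set_option autoImplicit false
set_option linter.unusedVariables false

/-! ### Statement 7

Let `A` be a GFG alternating parity automaton, `A^□` and `(Ā)^□`
nondeterministic parity GFG automata recognising `L(A)` and its complement
respectively, `σ` a positional winning strategy for Eve in the game `G(A)` and
`τ` a positional winning strategy for Adam in the game `G'(A)`.  The
deterministic parity automaton `D` built from `σ` and `τ` (with acceptance
inherited from `A`) satisfies `L(D) = L(A)`. -/

section Statement7

variable {Alph : Type} (M : AltAut Alph) (N1 N2 : NPA Alph)

/-- The game `G(A)`: from a configuration `(p, q)` with `p` a state of `(Ā)^□`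
(here `N2`) and `q` a state of `A`, Adam chooses a letter `a`, Eve chooses a
transition of `N2` from `p` over `a` together with a resolution of the
disjunctions of `δ(q, a)`, and Adam resolves the conjunctions, reaching `q'`.
Eve wins iff the run of `N2` is accepting or the path of `A` is accepting. -/
def gameG :
    Game (N2.S × M.Q) Alph (N2.T × Set M.Q) M.Q Unit Unit Unit where
  init := (N2.init, M.init)
  A1 _ := Set.univ
  E1 c a := {m | N2.src m.1 = c.1 ∧ N2.lab m.1 = a ∧ m.2 ∈ PosBool.eveRes (M.delta c.2 a)}
  A2 _ _ m := m.2
  E2 _ _ _ _ := Set.univ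
  A3 _ _ _ _ _ := Set.univ
  E3 _ _ _ _ _ _ := Set.univ
  next c _ m q' _ _ _ := (N2.dst m.1, q')
  win ρ := ParityAccept (fun n => N2.prio (ρ n).e1.1) ∨
           M.acc (fun n => ((ρ n).st.2, (ρ n).a1, (ρ n).a2))

/-- The game `G'(A)`: from a configuration `(p, q)` with `p` a state of `A^□`
(here `N1`) and `q` a state of `A`, Eve chooses a letter `a`, Adam chooses a
transition of `N1` from `p` over `a`, then Eve resolves the disjunctions of
`δ(q, a)` and Adam the conjunctions, reaching `q'`.  Adam wins iff the path of
`A` is rejecting or the run of `N1` is accepting; accordingly Eve's winning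
condition is that the path of `A` is accepting and the run of `N1` is
rejecting. -/
def gameG' :
    Game (N1.S × M.Q) Unit Alph N1.T (Set M.Q) M.Q Unit where
  init := (N1.init, M.init)
  A1 _ := Set.univ
  E1 _ _ := Set.univ
  A2 c _ a := {t | N1.src t = c.1 ∧ N1.lab t = a}
  E2 c _ a _ := PosBool.eveRes (M.delta c.2 a)
  A3 _ _ _ _ S := S
  E3 _ _ _ _ _ _ := Set.univ
  next c _ _ t _ q' _ := (N1.dst t, q')
  win ρ := M.acc (fun n => ((ρ n).st.2, (ρ n).e1, (ρ n).a3)) ∧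
           ¬ ParityAccept (fun n => N1.prio (ρ n).a2)

/-- The Eve strategy in `G(A)` induced by a positional strategy `pσ`
(depending only on the current configuration and the letter played). -/
def eStratOfPos (pσ : N2.S × M.Q → Alph → N2.T × Set M.Q) :
    Game.EStrat (N2.S × M.Q) Alph (N2.T × Set M.Q) M.Q Unit Unit Unit where
  f1 _ c a := pσ c a
  f2 _ _ _ _ _ := ()
  f3 _ _ _ _ _ _ _ := ()

/-- The Adam strategy in `G'(A)` induced by a positional strategy
`(pτ₂, pτ₃)` (depending only on the current configuration and the moves of the
current round). -/
def aStratOfPos (pτ₂ : N1.S × M.Q → Alph → N1.T)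
    (pτ₃ : N1.S × M.Q → Alph → N1.T → Set M.Q → M.Q) :
    Game.AStrat (N1.S × M.Q) Unit Alph N1.T (Set M.Q) M.Q Unit where
  g1 _ _ := ()
  g2 _ c _ a := pτ₂ c a
  g3 _ c _ a t S := pτ₃ c a t S

/-- The transition function of the deterministic automaton `D`: on a letter
`a` from `(q, p₁, p₂)`, the moves from `(q, p₂)` are the ones chosen by `σ` in
`G(A)` (resolving the nondeterminism of `N2` and the disjunctions of `A`), and
the moves from `(q, p₁)` are the ones chosen by `τ` in `G'(A)` (resolving the
nondeterminism of `N1` and the conjunctions of `A`). -/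
def prodStep (pσ : N2.S × M.Q → Alph → N2.T × Set M.Q)
    (pτ₂ : N1.S × M.Q → Alph → N1.T)
    (pτ₃ : N1.S × M.Q → Alph → N1.T → Set M.Q → M.Q)
    (c : M.Q × N1.S × N2.S) (a : Alph) : M.Q × N1.S × N2.S :=
  let m := pσ (c.2.2, c.1) a
  let t1 := pτ₂ (c.2.1, c.1) a
  (pτ₃ (c.2.1, c.1) a t1 m.2, N1.dst t1, N2.dst m.1)

/-- The deterministic parity automaton `D`, with acceptance inherited from `A`. -/
def prodDPA (p : M.Q → Alph → M.Q → ℕ)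
    (pσ : N2.S × M.Q → Alph → N2.T × Set M.Q)
    (pτ₂ : N1.S × M.Q → Alph → N1.T)
    (pτ₃ : N1.S × M.Q → Alph → N1.T → Set M.Q → M.Q) : DPA Alph where
  S := M.Q × N1.S × N2.S
  init := (M.init, N1.init, N2.init)
  step := prodStep M N1 N2 pσ pτ₂ pτ₃
  prio c a := p c.1 a (prodStep M N1 N2 pσ pτ₂ pτ₃ c a).1

section AuxProof

variable (p : M.Q → Alph → M.Q → ℕ)
  (pσ : N2.S × M.Q → Alph → N2.T × Set M.Q)
  (pτ₂ : N1.S × M.Q → Alph → N1.T)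
  (pτ₃ : N1.S × M.Q → Alph → N1.T → Set M.Q → M.Q)
  (w : ℕ → Alph)

/-- The run of the product automaton `D` on `w`. -/
def dRun : ℕ → M.Q × N1.S × N2.S := (prodDPA M N1 N2 p pσ pτ₂ pτ₃).run w

/-- The play of `G(A)` along the run of `D` on `w`. -/
def playG (n : ℕ) : GameRound (N2.S × M.Q) Alph (N2.T × Set M.Q) M.Q Unit Unit Unit where
  st := ((dRun M N1 N2 p pσ pτ₂ pτ₃ w n).2.2, (dRun M N1 N2 p pσ pτ₂ pτ₃ w n).1)
  a1 := w n
  e1 := pσ ((dRun M N1 N2 p pσ pτ₂ pτ₃ w n).2.2, (dRun M N1 N2 p pσ pτ₂ pτ₃ w n).1) (w n)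
  a2 := (dRun M N1 N2 p pσ pτ₂ pτ₃ w (n+1)).1
  e2 := ()
  a3 := ()
  e3 := ()

/-- The play of `G'(A)` along the run of `D` on `w`. -/
def playG' (n : ℕ) : GameRound (N1.S × M.Q) Unit Alph N1.T (Set M.Q) M.Q Unit where
  st := ((dRun M N1 N2 p pσ pτ₂ pτ₃ w n).2.1, (dRun M N1 N2 p pσ pτ₂ pτ₃ w n).1)
  a1 := ()
  e1 := w n
  a2 := pτ₂ ((dRun M N1 N2 p pσ pτ₂ pτ₃ w n).2.1, (dRun M N1 N2 p pσ pτ₂ pτ₃ w n).1) (w n)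
  e2 := (pσ ((dRun M N1 N2 p pσ pτ₂ pτ₃ w n).2.2, (dRun M N1 N2 p pσ pτ₂ pτ₃ w n).1) (w n)).2
  a3 := (dRun M N1 N2 p pσ pτ₂ pτ₃ w (n+1)).1
  e3 := ()

lemma stateOk_playG : Game.StateOk (gameG M N2) (playG M N1 N2 p pσ pτ₂ pτ₃ w) :=
  ⟨rfl, fun _ => rfl⟩

lemma consE_playG :
    Game.ConsE (eStratOfPos M N2 pσ) (playG M N1 N2 p pσ pτ₂ pτ₃ w) :=
  fun _ => ⟨rfl, rfl, rfl⟩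

lemma stateOk_playG' : Game.StateOk (gameG' M N1) (playG' M N1 N2 p pσ pτ₂ pτ₃ w) :=
  ⟨rfl, fun _ => rfl⟩

lemma consA_playG' :
    Game.ConsA (aStratOfPos M N1 pτ₂ pτ₃) (playG' M N1 N2 p pσ pτ₂ pτ₃ w) :=
  fun _ => ⟨rfl, rfl, rfl⟩

lemma legal_all
    (hσ : Game.EveWinningStrat (gameG M N2) (eStratOfPos M N2 pσ))
    (hτ : Game.AdamWinningStrat (gameG' M N1) (aStratOfPos M N1 pτ₂ pτ₃)) :
    ∀ n, Game.RoundLegal (gameG M N2) (playG M N1 N2 p pσ pτ₂ pτ₃ w) n ∧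
      Game.RoundLegal (gameG' M N1) (playG' M N1 N2 p pσ pτ₂ pτ₃ w) n := by
  have hE := hσ _ (stateOk_playG M N1 N2 p pσ pτ₂ pτ₃ w)
    (consE_playG M N1 N2 p pσ pτ₂ pτ₃ w)
  have hA := hτ _ (stateOk_playG' M N1 N2 p pσ pτ₂ pτ₃ w)
    (consA_playG' M N1 N2 p pσ pτ₂ pτ₃ w)
  set ρ := playG M N1 N2 p pσ pτ₂ pτ₃ w with hρ
  set ρ' := playG' M N1 N2 p pσ pτ₂ pτ₃ w with hρ'
  intro n
  induction n using Nat.strong_induction_on with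
  | _ n ih =>
    have hlegG : Game.Hleg (gameG M N2) ρ n := fun m hm => (ih m hm).1
    have hlegG' : Game.Hleg (gameG' M N1) ρ' n := fun m hm => (ih m hm).2
    have he1 : (ρ n).e1 ∈ (gameG M N2).E1 (ρ n).st (ρ n).a1 :=
      hE.1 n hlegG (Set.mem_univ _)
    have ha2' : (ρ' n).a2 ∈ (gameG' M N1).A2 (ρ' n).st (ρ' n).a1 (ρ' n).e1 :=
      hA.2.1 n hlegG' (Set.mem_univ _) (Set.mem_univ _)
    have he2' : (ρ' n).e2 ∈ (gameG' M N1).E2 (ρ' n).st (ρ' n).a1 (ρ' n).e1 (ρ' n).a2 :=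
      he1.2.2
    have ha3' : (ρ' n).a3 ∈ (gameG' M N1).A3 (ρ' n).st (ρ' n).a1 (ρ' n).e1 (ρ' n).a2 (ρ' n).e2 :=
      hA.2.2.1 n hlegG' (Set.mem_univ _) (Set.mem_univ _) ha2' he2'
    refine ⟨⟨Set.mem_univ _, he1, ha3', Set.mem_univ _, Set.mem_univ _, Set.mem_univ _⟩,
      ⟨Set.mem_univ _, Set.mem_univ _, ha2', he2', ha3', Set.mem_univ _⟩⟩

end AuxProof

theorem prodDPA_lang_eq
    (_ : Finite Alph) (_ : Finite M.Q)
    (p : M.Q → Alph → M.Q → ℕ) (hp : M.IsParity p)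
    (hGFG : M.GFG)
    (hN1lang : N1.Lang = M.Lang) (hN2lang : N2.Lang = M.Langᶜ)
    (hN1gfg : N1.GFG) (hN2gfg : N2.GFG)
    (pσ : N2.S × M.Q → Alph → N2.T × Set M.Q)
    (hσ : Game.EveWinningStrat (gameG M N2) (eStratOfPos M N2 pσ))
    (pτ₂ : N1.S × M.Q → Alph → N1.T)
    (pτ₃ : N1.S × M.Q → Alph → N1.T → Set M.Q → M.Q)
    (hτ : Game.AdamWinningStrat (gameG' M N1) (aStratOfPos M N1 pτ₂ pτ₃)) :
    (prodDPA M N1 N2 p pσ pτ₂ pτ₃).Lang = M.Lang := by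
  ext w
  have hE := hσ _ (stateOk_playG M N1 N2 p pσ pτ₂ pτ₃ w)
    (consE_playG M N1 N2 p pσ pτ₂ pτ₃ w)
  have hA := hτ _ (stateOk_playG' M N1 N2 p pσ pτ₂ pτ₃ w)
    (consA_playG' M N1 N2 p pσ pτ₂ pτ₃ w)
  have hleg := legal_all M N1 N2 p pσ pτ₂ pτ₃ w hσ hτ
  have hwinG := hE.2.2.2 (fun n => (hleg n).1)
  have hwinG' := hA.2.2.2 (fun n => (hleg n).2)
  -- the run of N2 produced by σ
  have hr2 : N2.IsRun w (fun n => (playG M N1 N2 p pσ pτ₂ pτ₃ w n).e1.1) :=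
    ⟨(hleg 0).1.2.1.1, fun n => (hleg (n+1)).1.2.1.1, fun n => (hleg n).1.2.1.2.1⟩
  -- the run of N1 produced by τ
  have hr1 : N1.IsRun w (fun n => (playG' M N1 N2 p pσ pτ₂ pτ₃ w n).a2) :=
    ⟨(hleg 0).2.2.2.1.1, fun n => (hleg (n+1)).2.2.2.1.1, fun n => (hleg n).2.2.2.1.2⟩
  constructor
  · intro hw
    have macc : M.acc (fun n => ((dRun M N1 N2 p pσ pτ₂ pτ₃ w n).1, w n,
        (dRun M N1 N2 p pσ pτ₂ pτ₃ w (n+1)).1)) :=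
      (hp (fun n => ((dRun M N1 N2 p pσ pτ₂ pτ₃ w n).1, w n,
        (dRun M N1 N2 p pσ pτ₂ pτ₃ w (n+1)).1))).mpr hw
    have hN1acc : ParityAccept (fun n => N1.prio (playG' M N1 N2 p pσ pτ₂ pτ₃ w n).a2) := by
      by_contra h
      exact hwinG' ⟨macc, h⟩
    have hmem : w ∈ N1.Lang := ⟨_, hr1, hN1acc⟩
    rwa [hN1lang] at hmem
  · intro hw
    rcases hwinG with h2 | hacc
    · exfalso
      have hmem : w ∈ N2.Lang := ⟨_, hr2, h2⟩
      rw [hN2lang] at hmem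
      exact hmem hw
    · exact (hp _).mp hacc

end Statement7
end

section
/- Let A be a nondeterministic finite automaton on finite words over Σ = {a, b}, let Ā be its dual (a universal automaton on finite words accepting the complement of L(A)), and let B be the alternating finite-word automaton that, from its initial state, after the first letter lets Eve guess the second letter via a disjunction: if the actual second letter differs from the guess, B proceeds to a rejecting sink ⊥, and otherwise it proceeds to the initial state of Ā. Then B is ∃GFG if and only if L(A) = Σ*. -/
set_option autoImplicit false
set_option linter.unusedVariables false

/-! ### Finite-word automata -/

namespace PosBool

/-- Satisfaction of a positive Boolean formula under a valuation. -/
def sat {Q : Type} (v : Q → Prop) : PosBool Q → Prop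
  | atom q => v q
  | and f g => sat v f ∧ sat v g
  | or f g => sat v f ∨ sat v g

end PosBool

/-- An alternating automaton on finite words. -/
structure AFA (A : Type) where
  Q : Type
  init : Q
  delta : Q → A → PosBool Q
  F : Set Q

namespace AFA

variable {A : Type}

/-- Acceptance of a finite word from a state: at the end of the word, accept
iff the current state is accepting; otherwise Eve resolves the disjunctions and
Adam the conjunctions of the one-step formula. -/
def AccFrom (M : AFA A) : M.Q → List A → Prop
  | q, [] => q ∈ M.F
  | q, x :: u => PosBool.sat (fun q' => M.AccFrom q' u) (M.delta q x)

/-- The language of `M`. -/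
def Lang (M : AFA A) : Set (List A) := {u | M.AccFrom M.init u}

/-- Eve's letter game on an alternating finite-word automaton: Adam picks
letters (and may stop at any point), the players resolve the one-step formulas
(Eve the disjunctions, Adam the conjunctions); Eve wins iff at every point, the
finite word produced so far is not in `L(M)` or the current state is
accepting. -/
def eLetterGame (M : AFA A) : Game M.Q A (Set M.Q) M.Q Unit Unit Unit where
  init := M.init
  A1 _ := Set.univ
  E1 q a := PosBool.eveRes (M.delta q a)
  A2 _ _ S := S
  E2 _ _ _ _ := Set.univ
  A3 _ _ _ _ _ := Set.univ
  E3 _ _ _ _ _ _ := Set.univ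
  next _ _ _ q' _ _ _ := q'
  win ρ := ∀ n, ((List.range n).map fun i => (ρ i).a1) ∈ M.Lang → (ρ n).st ∈ M.F

/-- `M` is ∃GFG. -/
def ExistsGFG (M : AFA A) : Prop := Game.EveWins M.eLetterGame

end AFA

/-- A nondeterministic finite automaton on finite words (with transitions given
by lists, so that the dual universal automaton has well-defined conjunctive
transition formulas). -/
structure NFAf (A : Type) where
  Q : Type
  init : Q
  delta : Q → A → List Q
  F : Set Q

namespace NFAf

variable {A : Type}

/-- Nondeterministic acceptance from a state. -/
def nAcc (N : NFAf A) : N.Q → List A → Prop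
  | q, [] => q ∈ N.F
  | q, x :: u => ∃ q' ∈ N.delta q x, N.nAcc q' u

end NFAf

/-! ### Statement 17

Let `A` be an NFA on finite words over `Σ = {a, b}` (modelled by `Bool`), let
`Ā` be its dual (a universal automaton accepting the complement of `L(A)`),
and let `B` be the alternating finite-word automaton that, from its initial
state, after the first letter lets Eve guess the second letter via a
disjunction: if the actual second letter differs from the guess, `B` proceeds
to a rejecting sink `⊥`, and otherwise it proceeds to the initial state of
`Ā`.  Then `B` is ∃GFG iff `L(A) = Σ*`. -/

/-- The states of `B`: the initial state, the two guess states, the rejecting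
sink, an accepting sink `top` (used to represent the empty conjunction when a
state of `Ā` has no successors), and the states of `Ā` (which are those of
`A`). -/
inductive BSt (Q : Type) : Type
  | start : BSt Q
  | guess : Bool → BSt Q
  | sink : BSt Q
  | top : BSt Q
  | inU : Q → BSt Q

/-- The conjunction of a finite list of states of `Ā` (the accepting sink `top`
for the empty conjunction). -/
def conjAtoms {Q : Type} : List Q → PosBool (BSt Q)
  | [] => .atom .top
  | [q] => .atom (.inU q)
  | q :: qs => .and (.atom (.inU q)) (conjAtoms qs)

/-- The alternating finite-word automaton `B` built from NFA `N`: the `inU`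
part is the dual `Ā` of `N` (conjunctive transitions, complemented accepting
states), and the initial part lets Eve guess the second letter. -/
def mkB (N : NFAf Bool) : AFA Bool where
  Q := BSt N.Q
  init := .start
  delta s x :=
    match s with
    | .start => .or (.atom (.guess true)) (.atom (.guess false))
    | .guess c => .atom (if x = c then .inU N.init else .sink)
    | .sink => .atom .sink
    | .top => .atom .top
    | .inU q => conjAtoms (N.delta q x)
  F := {s | s = .top ∨ ∃ q, s = BSt.inU q ∧ q ∉ N.F}


/-!
If `L(A) = Σ*` then `L(B)` is empty and Eve wins trivially. Otherwise pick `u ∉ L(A)`. Whatever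
Eve guesses for the second letter, Adam plays the other letter, which sends `B` to the
rejecting sink, and then plays `u`. The resulting word `x y u` lies in `L(B)`, witnessed by the
correct guess followed by the run of `Ā` accepting `u`, while Eve's run is stuck in the sink.
-/

namespace PosBool

variable {Q : Type}

theorem eveRes_nonempty_s17 (φ : PosBool Q) : φ.eveRes.Nonempty := by
  induction φ with
  | atom q => exact ⟨{q}, rfl⟩
  | and f g hf hg =>
    obtain ⟨s, hs⟩ := hf
    obtain ⟨t, ht⟩ := hg
    exact ⟨s ∪ t, s, hs, t, ht, rfl⟩
  | or f g hf _ => exact hf.mono Set.subset_union_left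

theorem nonempty_of_mem_eveRes {φ : PosBool Q} {S : Set Q} (h : S ∈ φ.eveRes) :
    S.Nonempty := by
  induction φ generalizing S with
  | atom q => exact h ▸ Set.singleton_nonempty q
  | and f g hf _ =>
    obtain ⟨s, hs, t, -, rfl⟩ := h
    exact (hf hs).mono Set.subset_union_left
  | or f g hf hg => exact h.elim hf hg

theorem eq_of_mem_of_mem_eveRes_atom {q q' : Q} {S : Set Q} (hS : S ∈ (atom q).eveRes)
    (hq' : q' ∈ S) : q' = q :=
  Set.mem_singleton_iff.mp (hS ▸ hq')

end PosBool

namespace AFA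

variable {A : Type} (M : AFA A)

theorem existsGFG_of_lang_eq_empty (h : M.Lang = ∅) : M.ExistsGFG := by
  refine ⟨⟨fun _ q a => (M.delta q a).eveRes_nonempty_s17.some, fun _ _ _ _ _ => (),
    fun _ _ _ _ _ _ _ => ()⟩, fun ρ _ hσ => ⟨?_, ?_, ?_, ?_⟩⟩
  · intro n _ _
    rw [(hσ n).1]
    exact Set.Nonempty.some_mem _
  · exact fun _ _ _ _ _ => Set.mem_univ _
  · exact fun _ _ _ _ _ _ _ => Set.mem_univ _
  · intro _ n hw
    simp [h] at hw

abbrev LetterRound := GameRound M.Q A (Set M.Q) M.Q Unit Unit Unit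

abbrev EveLetterStrat := Game.EStrat M.Q A (Set M.Q) M.Q Unit Unit Unit

/-! Adam's play against a fixed strategy `σ` of Eve: in round `n`, from state `q`, he plays the
letter `letter n q` and then any state of the set chosen by Eve. -/

variable {M} (σ : M.EveLetterStrat) (letter : ℕ → M.Q → A)

noncomputable def pickState (S : Set M.Q) : M.Q :=
  haveI : Nonempty M.Q := ⟨M.init⟩
  Classical.epsilon (· ∈ S)

theorem pickState_mem {S : Set M.Q} (h : S.Nonempty) : pickState S ∈ S :=
  haveI : Nonempty M.Q := ⟨M.init⟩
  Classical.epsilon_spec h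

noncomputable def nextRound (l : List M.LetterRound) : M.LetterRound :=
  let q := (l.getLast?.map (·.a2)).getD M.init
  let S := σ.f1 l q (letter l.length q)
  ⟨q, letter l.length q, S, pickState S, (), (), ()⟩

noncomputable def counterHistory : ℕ → List M.LetterRound
  | 0 => []
  | n + 1 => counterHistory n ++ [nextRound σ letter (counterHistory n)]

noncomputable def counterplay (n : ℕ) : M.LetterRound :=
  nextRound σ letter (counterHistory σ letter n)

theorem length_counterHistory (n : ℕ) : (counterHistory σ letter n).length = n := by
  induction n with
  | zero => rfl
  | succ n ih => simp [counterHistory, ih]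

theorem hist_counterplay (n : ℕ) :
    Game.hist (counterplay σ letter) n = counterHistory σ letter n := by
  induction n with
  | zero => rfl
  | succ n ih =>
    rw [Game.hist, List.range_succ, List.map_append, ← Game.hist, ih]
    rfl

theorem counterplay_a1 (n : ℕ) :
    (counterplay σ letter n).a1 = letter n (counterplay σ letter n).st := by
  simp only [counterplay, nextRound, length_counterHistory]

theorem counterplay_st_succ (n : ℕ) :
    (counterplay σ letter (n + 1)).st = (counterplay σ letter n).a2 := by
  simp [counterplay, nextRound, counterHistory]

theorem counterplay_stateOk : Game.StateOk M.eLetterGame (counterplay σ letter) :=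
  ⟨rfl, counterplay_st_succ σ letter⟩

theorem counterplay_consE : Game.ConsE σ (counterplay σ letter) := fun n => by
  rw [hist_counterplay]
  exact ⟨rfl, rfl, rfl⟩

theorem roundLegal_counterplay (hσ : Game.EveWinningStrat M.eLetterGame σ) (n : ℕ) :
    Game.RoundLegal M.eLetterGame (counterplay σ letter) n := by
  induction n using Nat.strong_induction_on with
  | _ n ih =>
    have hS := (hσ _ (counterplay_stateOk σ letter) (counterplay_consE σ letter)).1 n ih
      (Set.mem_univ _)
    exact ⟨Set.mem_univ _, hS, pickState_mem (PosBool.nonempty_of_mem_eveRes hS),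
      Set.mem_univ _, Set.mem_univ _, Set.mem_univ _⟩

theorem ExistsGFG.exists_run (h : M.ExistsGFG) (letter : ℕ → M.Q → A) :
    ∃ qs : ℕ → M.Q, qs 0 = M.init ∧
      (∀ n, ∃ S ∈ (M.delta (qs n) (letter n (qs n))).eveRes, qs (n + 1) ∈ S) ∧
      ∀ n, ((List.range n).map fun i => letter i (qs i)) ∈ M.Lang → qs n ∈ M.F := by
  obtain ⟨σ, hσ⟩ := h
  have hlegal := roundLegal_counterplay σ letter hσ
  have hwin := (hσ _ (counterplay_stateOk σ letter) (counterplay_consE σ letter)).2.2.2 hlegal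
  refine ⟨fun n => (counterplay σ letter n).st, rfl, fun n => ?_, fun n hn => hwin n ?_⟩
  · obtain ⟨-, hS, hq, -⟩ := hlegal n
    refine ⟨(counterplay σ letter n).e1, ?_, ?_⟩
    · rwa [counterplay_a1 σ letter n] at hS
    · rwa [← counterplay_st_succ σ letter n] at hq
  · simpa only [counterplay_a1] using hn

end AFA

section mkB

theorem sat_conjAtoms {Q : Type} (v : BSt Q → Prop) (hv : v .top) (l : List Q) :
    (conjAtoms l).sat v ↔ ∀ q ∈ l, v (.inU q) := by
  induction l with
  | nil => simpa [conjAtoms, PosBool.sat] using hv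
  | cons q qs ih =>
    cases qs with
    | nil => simp [conjAtoms, PosBool.sat]
    | cons r rs => simp_all [conjAtoms, PosBool.sat]

variable (N : NFAf Bool)

theorem accFrom_top (u : List Bool) : (mkB N).AccFrom .top u := by
  induction u with
  | nil => exact Or.inl rfl
  | cons _ _ ih => exact ih

theorem not_accFrom_sink (u : List Bool) : ¬ (mkB N).AccFrom .sink u := by
  induction u with
  | nil => rintro (h | ⟨q, h, -⟩) <;> cases h
  | cons _ _ ih => exact ih

theorem accFrom_inU_iff (u : List Bool) (q : N.Q) :
    (mkB N).AccFrom (.inU q) u ↔ ¬ N.nAcc q u := by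
  induction u generalizing q with
  | nil =>
    show (_ ∨ ∃ q', BSt.inU q = .inU q' ∧ q' ∉ N.F) ↔ q ∉ N.F
    simp
  | cons x u ih =>
    refine (sat_conjAtoms (fun s : BSt N.Q => (mkB N).AccFrom s u) (accFrom_top N u) _).trans ?_
    simp [NFAf.nAcc, ih]

theorem accFrom_guess_cons_iff (c y : Bool) (v : List Bool) :
    (mkB N).AccFrom (.guess c) (y :: v) ↔ y = c ∧ ¬ N.nAcc N.init v := by
  by_cases h : y = c
  · simpa [AFA.AccFrom, mkB, h, PosBool.sat] using accFrom_inU_iff N v N.init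
  · simpa [AFA.AccFrom, mkB, h, PosBool.sat] using not_accFrom_sink N v

theorem mem_lang_mkB_iff (w : List Bool) :
    w ∈ (mkB N).Lang ↔ ∃ x y v, w = x :: y :: v ∧ ¬ N.nAcc N.init v := by
  match w with
  | [] => simp [AFA.Lang, AFA.AccFrom, mkB]
  | [x] => simp [AFA.Lang, AFA.AccFrom, mkB, PosBool.sat]
  | x :: y :: v =>
    show (mkB N).AccFrom (.guess true) (y :: v) ∨ (mkB N).AccFrom (.guess false) (y :: v) ↔ _
    cases y <;> simp [accFrom_guess_cons_iff]

theorem lang_mkB_eq_empty_of_universal (h : ∀ u, N.nAcc N.init u) : (mkB N).Lang = ∅ :=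
  Set.eq_empty_of_forall_notMem fun w hw => by
    obtain ⟨-, -, v, -, hv⟩ := (mem_lang_mkB_iff N w).1 hw
    exact hv (h v)

/-- Adam's letters against `B`: any first letter, then the negation of Eve's guess, then `u`. -/
def counterLetter {Q : Type} (u : List Bool) : ℕ → BSt Q → Bool
  | 1, .guess c => !c
  | n + 2, _ => u.getD n true
  | _, _ => true

theorem universal_of_existsGFG_mkB (h : (mkB N).ExistsGFG) (u : List Bool) :
    N.nAcc N.init u := by
  by_contra hu
  obtain ⟨qs, h0, hstep, hacc⟩ := h.exists_run (counterLetter u)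
  obtain ⟨c, h1⟩ : ∃ c, qs 1 = .guess c := by
    obtain ⟨S, hS, hq⟩ := hstep 0
    rw [h0] at hS
    rcases hS with hS | hS
    exacts [⟨true, PosBool.eq_of_mem_of_mem_eveRes_atom hS hq⟩,
      ⟨false, PosBool.eq_of_mem_of_mem_eveRes_atom hS hq⟩]
  have hsink : ∀ k, qs (k + 2) = .sink := by
    intro k
    induction k with
    | zero =>
      obtain ⟨S, hS, hq⟩ := hstep 1
      rw [h1] at hS
      exact PosBool.eq_of_mem_of_mem_eveRes_atom (by simpa [mkB, counterLetter] using hS) hq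
    | succ k ih =>
      obtain ⟨S, hS, hq⟩ := hstep (k + 2)
      rw [ih] at hS
      exact PosBool.eq_of_mem_of_mem_eveRes_atom hS hq
  have hword : ((List.range (u.length + 2)).map fun i => counterLetter u i (qs i)) =
      true :: (!c) :: u := by
    refine List.ext_getElem (by simp) fun i hi _ => ?_
    rcases i with _ | _ | k
    · simp [h0, mkB, counterLetter]
    · simp [h1, counterLetter]
    · simp only [List.length_map, List.length_range] at hi
      simp [counterLetter, List.getElem?_eq_getElem (show k < u.length by omega)]
  have hF := hacc _ (hword ▸ (mem_lang_mkB_iff N _).2 ⟨_, _, _, rfl, hu⟩)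
  rw [hsink] at hF
  rcases hF with hF | ⟨q, hF, -⟩ <;> cases hF

end mkB

theorem mkB_existsGFG_iff_universal_general (N : NFAf Bool) :
    (mkB N).ExistsGFG ↔ ∀ u : List Bool, N.nAcc N.init u :=
  ⟨universal_of_existsGFG_mkB N,
    fun h => AFA.existsGFG_of_lang_eq_empty _ (lang_mkB_eq_empty_of_universal N h)⟩

theorem mkB_existsGFG_iff_universal (N : NFAf Bool) [Finite N.Q] :
    (mkB N).ExistsGFG ↔ ∀ u : List Bool, N.nAcc N.init u :=
  mkB_existsGFG_iff_universal_general N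
end
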